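/- arXiv:2111.05411 — 3 statements merged into one kernel-verified Lean document; each statement's English description precedes it below -/
import Mathlib

section
/- Let R be a rational function with a simple zero of R' at β_i (R'(β_i)=0, R''(β_i)≠0), and suppose R'''(z)/R'(z) - (R''(z)/R'(z))^2 = -∑_j 1/(z-β_j)^2 + 2∑_k 1/(z+ε_k)^2 for all z distinct from the β_j and −ε_k. Then R''''(β_i)/(3R''(β_i)) - R'''(β_i)^2/(4R''(β_i)^2) = -∑_{j≠i} 1/(β_i-β_j)^2 + 2∑_k 1/(β_i+ε_k)^2. -/
/-!
Write `g = R'`, which vanishes at `b = β i`, as `g z = (z - b) * h z` with `h = dslope g b`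
analytic and `h b = R''(b) ≠ 0`. Since `g''/g - (g'/g)²` is the second logarithmic derivative of
`g`, it equals that of `h` minus `1/(z - b)²`. So the second logarithmic derivative of `h` agrees
near `b` with the right-hand side stripped of its `j = i` term; both are continuous at `b`, and
evaluating at `b` with the Leibniz values `h' b = R'''(b)/2`, `h'' b = R''''(b)/3` gives the claim.
-/

open Finset Filter Topology

section

variable {𝕜 : Type*} [NontriviallyNormedField 𝕜]

lemma iteratedDeriv_id_sub_const (b x : 𝕜) (n : ℕ) :
    iteratedDeriv n (fun w => w - b) x = if n = 0 then x - b else if n = 1 then 1 else 0 := by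
  rcases n with _ | _ | n <;> simp [iteratedDeriv_succ', iteratedDeriv_const]

theorem iteratedDeriv_succ_sub_mul {h : 𝕜 → 𝕜} {n : ℕ} (b x : 𝕜)
    (hh : ContDiffAt 𝕜 (n + 1) h x) :
    iteratedDeriv (n + 1) (fun w => (w - b) * h w) x
      = (n + 1) * iteratedDeriv n h x + (x - b) * iteratedDeriv (n + 1) h x := by
  rw [iteratedDeriv_fun_mul (by fun_prop) hh, sum_range_succ', sum_range_succ',
    sum_eq_zero fun i _ => by simp [iteratedDeriv_id_sub_const]]
  simp [iteratedDeriv_id_sub_const]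

noncomputable def secondLogDeriv (f : 𝕜 → 𝕜) (z : 𝕜) : 𝕜 :=
  iteratedDeriv 2 f z / f z - (deriv f z / f z) ^ 2

theorem secondLogDeriv_sub_mul {h : 𝕜 → 𝕜} {b z : 𝕜} (hh : ContDiffAt 𝕜 2 h z)
    (hz : z ≠ b) (hhz : h z ≠ 0) :
    secondLogDeriv (fun w => (w - b) * h w) z = secondLogDeriv h z - 1 / (z - b) ^ 2 := by
  have hzb : z - b ≠ 0 := sub_ne_zero.mpr hz
  have d1 := iteratedDeriv_succ_sub_mul (n := 0) b z (hh.of_le (by norm_num))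
  have d2 := iteratedDeriv_succ_sub_mul (n := 1) b z hh
  simp only [iteratedDeriv_zero, iteratedDeriv_one, Nat.reduceAdd] at d1 d2
  rw [secondLogDeriv, secondLogDeriv, d1, d2]
  field_simp
  ring

theorem secondLogDeriv_deriv (f : 𝕜 → 𝕜) (z : 𝕜) :
    secondLogDeriv (deriv f) z
      = iteratedDeriv 3 f z / deriv f z - (iteratedDeriv 2 f z / deriv f z) ^ 2 := by
  simp only [secondLogDeriv, iteratedDeriv_succ, iteratedDeriv_zero]

theorem AnalyticAt.continuousAt_secondLogDeriv [CompleteSpace 𝕜] {h : 𝕜 → 𝕜} {b : 𝕜}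
    (hh : AnalyticAt 𝕜 h b) (hb : h b ≠ 0) : ContinuousAt (secondLogDeriv h) b := by
  have h2 : iteratedDeriv 2 h = deriv (deriv h) := by
    rw [iteratedDeriv_succ, iteratedDeriv_one]
  unfold secondLogDeriv
  rw [h2]
  exact (hh.deriv.deriv.continuousAt.div hh.continuousAt hb).sub
    ((hh.deriv.continuousAt.div hh.continuousAt hb).pow 2)

theorem AnalyticAt.dslope [CompleteSpace 𝕜] {f : 𝕜 → 𝕜} {a : 𝕜} (hf : AnalyticAt 𝕜 f a) :
    AnalyticAt 𝕜 (dslope f a) a :=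
  let ⟨_, hp⟩ := hf
  ⟨_, hp.has_fpower_series_dslope_fslope⟩

theorem eq_sub_mul_dslope {f : 𝕜 → 𝕜} {a : 𝕜} (hf : f a = 0) :
    f = fun w => (w - a) * dslope f a w := by
  ext w
  rw [← smul_eq_mul, sub_smul_dslope, hf, sub_zero]

variable [CompleteSpace 𝕜] {g : 𝕜 → 𝕜} {b : 𝕜}

theorem secondLogDeriv_dslope_self [CharZero 𝕜] (hg : AnalyticAt 𝕜 g b) (hg0 : g b = 0) :
    secondLogDeriv (dslope g b) b
      = iteratedDeriv 3 g b / (3 * deriv g b) - iteratedDeriv 2 g b ^ 2 / (4 * deriv g b ^ 2) := by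
  have hh := hg.dslope.contDiffAt (n := 3)
  have d2 := iteratedDeriv_succ_sub_mul (n := 1) b b (hh.of_le (by norm_num))
  have d3 := iteratedDeriv_succ_sub_mul (n := 2) b b hh
  rw [← eq_sub_mul_dslope hg0] at d2 d3
  simp only [sub_self, zero_mul, add_zero, iteratedDeriv_one, Nat.reduceAdd] at d2 d3
  rw [secondLogDeriv, d2, d3, dslope_same]
  norm_num
  ring

theorem secondLogDeriv_dslope_eventuallyEq (hg : AnalyticAt 𝕜 g b) (hg0 : g b = 0)
    (hg1 : deriv g b ≠ 0) :
    ∀ᶠ z in 𝓝[≠] b, secondLogDeriv (dslope g b) z = secondLogDeriv g z + 1 / (z - b) ^ 2 := by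
  have hh := hg.dslope
  have hhb : dslope g b b ≠ 0 := by rwa [dslope_same]
  filter_upwards [nhdsWithin_le_nhds (hh.eventually_analyticAt.and
    (hh.continuousAt.eventually_ne hhb)), self_mem_nhdsWithin] with z ⟨hz, hz0⟩ hzb
  have key := secondLogDeriv_sub_mul hz.contDiffAt hzb hz0
  rw [← eq_sub_mul_dslope hg0] at key
  rw [key]
  ring

end

theorem eventually_nhdsNE_forall_ne {X ι : Type*} [TopologicalSpace X] [T1Space X] [Finite ι]
    (a : ι → X) (x : X) : ∀ᶠ z in 𝓝[≠] x, ∀ j, z ≠ a j :=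
  nhdsNE_le_cofinite x (eventually_all.2 fun j => eventually_cofinite_ne (a j))

/-- The constant term of the Laurent expansion at a simple ramification point:
`R''''(β_i)/(3R''(β_i)) - R'''(β_i)²/(4R''(β_i)²)
  = -∑_{j≠i} 1/(β_i-β_j)² + 2∑_k 1/(β_i+ε_k)²`. -/
theorem stmt_4 (d : ℕ) (β : Fin (2 * d) → ℂ) (ε : Fin d → ℂ) (R : ℂ → ℂ)
    (i : Fin (2 * d))
    (hβinj : Function.Injective β) (hβε : ∀ j k, β j ≠ -ε k)
    (hana : AnalyticAt ℂ R (β i))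
    (h1 : deriv R (β i) = 0) (h2 : iteratedDeriv 2 R (β i) ≠ 0)
    (H : ∀ z : ℂ, (∀ j, z ≠ β j) → (∀ k, z ≠ -ε k) →
      iteratedDeriv 3 R z / deriv R z - (iteratedDeriv 2 R z / deriv R z) ^ 2
        = -(∑ j, 1 / (z - β j) ^ 2) + 2 * ∑ k, 1 / (z + ε k) ^ 2) :
    iteratedDeriv 4 R (β i) / (3 * iteratedDeriv 2 R (β i))
        - (iteratedDeriv 3 R (β i)) ^ 2 / (4 * (iteratedDeriv 2 R (β i)) ^ 2)
      = -(∑ j ∈ Finset.univ.filter (fun j => j ≠ i), 1 / (β i - β j) ^ 2)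
          + 2 * ∑ k, 1 / (β i + ε k) ^ 2 := by
  set F : ℂ → ℂ := fun z => -(∑ j ∈ Finset.univ.filter (fun j => j ≠ i), 1 / (z - β j) ^ 2)
    + 2 * ∑ k, 1 / (z + ε k) ^ 2 with hF
  have hR : ∀ n, iteratedDeriv (n + 1) R = iteratedDeriv n (deriv R) := fun n => iteratedDeriv_succ'
  have hg1 : deriv (deriv R) (β i) ≠ 0 := by rwa [hR 1, iteratedDeriv_one] at h2
  have hF_cont : ContinuousAt F (β i) := by
    refine (tendsto_finsetSum _ fun j hj => ?_).neg.add
      ((tendsto_finsetSum _ fun k _ => ?_).const_mul 2)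
    · have hij : β i - β j ≠ 0 := sub_ne_zero.2 (hβinj.ne (mem_filter.1 hj).2.symm)
      exact ContinuousAt.tendsto (by fun_prop (disch := exact pow_ne_zero 2 hij))
    · have hik : β i + ε k ≠ 0 := fun h0 => hβε i k (eq_neg_of_add_eq_zero_left h0)
      exact ContinuousAt.tendsto (by fun_prop (disch := exact pow_ne_zero 2 hik))
  have hlocal : ∀ᶠ z in 𝓝[≠] β i, secondLogDeriv (dslope (deriv R) (β i)) z = F z := by
    filter_upwards [secondLogDeriv_dslope_eventuallyEq hana.deriv h1 hg1,
      eventually_nhdsNE_forall_ne β (β i), eventually_nhdsNE_forall_ne (-ε) (β i)]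
      with z hz hzβ hzε
    rw [hz, secondLogDeriv_deriv, H z hzβ hzε, hF, filter_ne', ← add_sum_erase _ _ (mem_univ i)]
    ring
  have hval := ((hana.deriv.dslope.continuousAt_secondLogDeriv (by rwa [dslope_same])
    ).eventuallyEq_nhds_iff_eventuallyEq_nhdsNE hF_cont).1 hlocal |>.eq_of_nhds
  rw [hR 3, hR 2, hR 1, iteratedDeriv_one, ← secondLogDeriv_dslope_self hana.deriv h1]
  exact hval
end

section
/- Under the decomposition 1/(R'(z)R'(-z)(z+ε_b)^2) = ∑_i (1/(R'(-β_i)R''(β_i)))·(1/((z-β_i)(β_i+ε_b)^2) - 1/((z+β_i)(ε_b-β_i)^2)), differentiating with respect to z and evaluating at z = 0 yields ∑_{i=1}^{2d} (1/(R'(-β_i)R''(β_i)β_i^2))·( 1/((β_i+ε_b)^2) - 1/((β_i-ε_b)^2) ) = 2/(R'(0)^2 ε_b^3), assuming 0 is not a pole, R'(0)≠0, and R'(-z)|_{z=0}=R'(0). -/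
/-!
Near `z = 0` both sides of the partial fraction decomposition are differentiable functions that
agree off the finitely many poles, so their derivatives at `0` coincide. Since `R'(z)R'(-z)` is
even, its derivative vanishes at `0` and the left side has derivative `-2/(R'(0)² ε_b³)`; each
simple-pole term `1/((z - b)p)` has derivative `-1/(b² p)` at `0`.
-/

open Finset Filter Topology

variable {𝕜 : Type*} [NontriviallyNormedField 𝕜]

theorem hasDerivAt_one_div_sub_mul {a b : 𝕜} (p : 𝕜) (hab : a ≠ b) :
    HasDerivAt (fun z => 1 / ((z - b) * p)) (-1 / ((a - b) ^ 2 * p)) a := by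
  rcases eq_or_ne p 0 with rfl | hp
  -- for `p = 0` both the function and the claimed derivative are `0`, by division by zero
  · simpa using hasDerivAt_const a (0 : 𝕜)
  have h := (hasDerivAt_const a (1 : 𝕜)).fun_div (((hasDerivAt_id' a).sub_const b).mul_const p)
    (mul_ne_zero (sub_ne_zero.2 hab) hp)
  refine h.congr_deriv ?_
  field_simp
  ring

theorem hasDerivAt_one_div_add_mul {a b : 𝕜} (p : 𝕜) (hab : a ≠ -b) :
    HasDerivAt (fun z => 1 / ((z + b) * p)) (-1 / ((a + b) ^ 2 * p)) a := by
  simpa using hasDerivAt_one_div_sub_mul p hab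

theorem hasDerivAt_one_div_mul_add_sq {g : 𝕜 → 𝕜} {ε : 𝕜} (hg : HasDerivAt g 0 0)
    (hg0 : g 0 ≠ 0) (hε : ε ≠ 0) :
    HasDerivAt (fun z => 1 / (g z * (z + ε) ^ 2)) (-2 / (g 0 * ε ^ 3)) 0 := by
  have hsq : HasDerivAt (fun z : 𝕜 => (z + ε) ^ 2) (2 * ε) 0 := by
    simpa using ((hasDerivAt_id (0 : 𝕜)).add_const ε).fun_pow 2
  have h := (hasDerivAt_const (0 : 𝕜) (1 : 𝕜)).fun_div (hg.fun_mul hsq)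
    (by simpa using mul_ne_zero hg0 (pow_ne_zero 2 hε))
  refine h.congr_deriv ?_
  simp only [zero_add]
  field_simp
  ring

theorem stmt_7_general (d : ℕ) (β : Fin (2 * d) → ℂ) (εb : ℂ) (R : ℂ → ℂ)
    (hβ0 : ∀ i, β i ≠ 0) (hεb0 : εb ≠ 0)
    (hR0 : deriv R 0 ≠ 0)
    (hdiff : DifferentiableAt ℂ (fun z => deriv R z * deriv R (-z)) 0)
    (heven : deriv (fun z => deriv R z * deriv R (-z)) 0 = 0)
    (H : ∀ z : ℂ, (∀ i, z ≠ β i ∧ z ≠ -β i) → z ≠ -εb →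
      1 / (deriv R z * deriv R (-z) * (z + εb) ^ 2)
        = ∑ i, (1 / (deriv R (-β i) * deriv (deriv R) (β i)))
            * (1 / ((z - β i) * (β i + εb) ^ 2)
               - 1 / ((z + β i) * (εb - β i) ^ 2))) :
    ∑ i, (1 / (deriv R (-β i) * deriv (deriv R) (β i) * (β i) ^ 2))
        * (1 / (β i + εb) ^ 2 - 1 / (β i - εb) ^ 2)
      = 2 / ((deriv R 0) ^ 2 * εb ^ 3) := by
  set g : ℂ → ℂ := fun z => deriv R z * deriv R (-z)
  have hg0 : g 0 = deriv R 0 ^ 2 := by simp [g, sq]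
  have hLHS := hasDerivAt_one_div_mul_add_sq (heven ▸ hdiff.hasDerivAt) (hg0 ▸ pow_ne_zero 2 hR0)
    hεb0
  have hRHS := HasDerivAt.fun_sum (u := univ) fun i _ =>
    ((hasDerivAt_one_div_sub_mul ((β i + εb) ^ 2) (hβ0 i).symm).fun_sub
      (hasDerivAt_one_div_add_mul ((εb - β i) ^ 2) (neg_ne_zero.2 (hβ0 i)).symm)).const_mul
      (1 / (deriv R (-β i) * deriv (deriv R) (β i)))
  have hpoles : ∀ᶠ z in 𝓝 (0 : ℂ), (∀ i, z ≠ β i ∧ z ≠ -β i) ∧ z ≠ -εb :=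
    (eventually_all.2 fun i => (eventually_ne_nhds (hβ0 i).symm).and
      (eventually_ne_nhds (neg_ne_zero.2 (hβ0 i)).symm)).and
      (eventually_ne_nhds (neg_ne_zero.2 hεb0).symm)
  have hderiv := (hRHS.congr_of_eventuallyEq (hpoles.mono fun z hz => H z hz.1 hz.2)).unique hLHS
  rw [hg0] at hderiv
  calc _ = -∑ i, 1 / (deriv R (-β i) * deriv (deriv R) (β i)) *
          (-1 / ((0 - β i) ^ 2 * (β i + εb) ^ 2) - -1 / ((0 + β i) ^ 2 * (εb - β i) ^ 2)) := by
        rw [← sum_neg_distrib]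
        exact sum_congr rfl fun i _ => by
          simp only [← neg_sub εb (β i), zero_sub, zero_add, neg_sq, div_eq_mul_inv, mul_inv]
          ring
    _ = _ := by rw [hderiv]; ring

/-- Differentiating the decomposition of `1/(R'(z)R'(-z)(z+ε_b)²)` at `z = 0` yields
`∑_i (1/(R'(-β_i)R''(β_i)β_i²))(1/(β_i+ε_b)² - 1/(β_i-ε_b)²) = 2/(R'(0)²ε_b³)`. -/
theorem stmt_7 (d : ℕ) (β : Fin (2 * d) → ℂ) (εb : ℂ) (R : ℂ → ℂ)
    (hβ0 : ∀ i, β i ≠ 0) (hεb0 : εb ≠ 0)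
    (hεbβ : ∀ i, εb ≠ β i ∧ εb ≠ -β i)
    (hR0 : deriv R 0 ≠ 0)
    (hdiff : DifferentiableAt ℂ (fun z => deriv R z * deriv R (-z)) 0)
    (heven : deriv (fun z => deriv R z * deriv R (-z)) 0 = 0)
    (H : ∀ z : ℂ, (∀ i, z ≠ β i ∧ z ≠ -β i) → z ≠ -εb →
      1 / (deriv R z * deriv R (-z) * (z + εb) ^ 2)
        = ∑ i, (1 / (deriv R (-β i) * deriv (deriv R) (β i)))
            * (1 / ((z - β i) * (β i + εb) ^ 2)
               - 1 / ((z + β i) * (εb - β i) ^ 2))) :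
    ∑ i, (1 / (deriv R (-β i) * deriv (deriv R) (β i) * (β i) ^ 2))
        * (1 / (β i + εb) ^ 2 - 1 / (β i - εb) ^ 2)
      = 2 / ((deriv R 0) ^ 2 * εb ^ 3) :=
  stmt_7_general d β εb R hβ0 hεb0 hR0 hdiff heven H
end

section
/- Evaluating the partial fraction identity 1/(R'(z)R'(-z)(z+w)^2) = (terms regular at the β_i) + ∑_i (1/(R''(β_i)R'(-β_i)))·(1/((z-β_i)(w+β_i)^2) - 1/((z+β_i)(w-β_i)^2)) at (z,w)=(ε_a,ε_b) with ε_a, ε_b poles of R annihilating the left side appropriately yields: 0 = ∑_{i=1}^{2d} (1/(R'(-β_i)R''(β_i))) · ( 1/((ε_a-β_i)^2(β_i+ε_b)^2) - 1/((ε_a+β_i)^2(ε_b-β_i)^2) ), whenever the difference of the two partial fraction expansions (in z around ε_a, and symmetrically) of the symmetric function 1/(R'(z)R'(-z)(z+w)^2) is compared. -/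
/-!
Write `R' = P / Q` with `P(z) = ∏ᵢ (z - βᵢ)` and `Q(z) = ∏ₙ (z + εₙ)²`, and let
`N(z) = Q(z) Q(-z) / ((z + ε_b)² (ε_a - z)²)`, a polynomial of degree `4d - 4`.
The rational function `N(z) / (P(z) P(-z))` has simple poles at the `4d` points `±βᵢ` and
decays like `z⁻⁴`, so its residues sum to zero; equivalently, the coefficient of `z^(4d-1)` in the
Lagrange interpolant of `N` at the nodes `±βᵢ` vanishes. The residues at `βᵢ` and `-βᵢ` are
`N(±βᵢ) / (±P'(βᵢ) P(-βᵢ))`, and since `R'(-βᵢ) R''(βᵢ) = P(-βᵢ) P'(βᵢ) / (Q(-βᵢ) Q(βᵢ))`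
their sum is exactly the `i`-th summand.
-/

open Finset Polynomial Filter Topology

theorem Finset.prod_erase_eq_div₀ {M ι : Type*} [CommGroupWithZero M] [DecidableEq ι]
    {s : Finset ι} {f : ι → M} {a : ι} (ha : a ∈ s) (hfa : f a ≠ 0) :
    ∏ x ∈ s.erase a, f x = (∏ x ∈ s, f x) / f a :=
  eq_div_of_mul_eq hfa (prod_erase_mul s f ha)

theorem natDegree_mul_comp_neg_le {R : Type*} [CommRing R] [IsDomain R] (p q : R[X]) :
    (p * q.comp (-X)).natDegree ≤ p.natDegree + q.natDegree :=
  natDegree_mul_le.trans (by rw [natDegree_comp, natDegree_neg, natDegree_X, mul_one])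

namespace Lagrange

theorem sum_eval_div_prod_sub_eq_zero {F ι : Type*} [Field F] [DecidableEq ι] {s : Finset ι}
    {v : ι → F} (hvs : Set.InjOn v s) {p : F[X]} (hp : p.degree < ↑(#s - 1)) :
    ∑ i ∈ s, p.eval (v i) / ∏ j ∈ s.erase i, (v i - v j) = 0 := by
  rw [← coeff_eq_sum hvs (hp.trans_le (by exact_mod_cast Nat.sub_le _ _)),
    coeff_eq_zero_of_degree_lt hp]

theorem eval_nodal_neg_sq {R κ : Type*} [CommRing R] (s : Finset κ) (ε : κ → R) (x : R) :
    (nodal s (-ε) ^ 2).eval x = ∏ n ∈ s, (x + ε n) ^ 2 := by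
  simp [eval_nodal, prod_pow, sub_neg_eq_add]

end Lagrange

section SymmetricNodes

variable {R ι : Type*} [CommRing R] [Fintype ι] [DecidableEq ι] (β : ι → R) (i : ι)

theorem prod_erase_inl_sub_sumElim_neg :
    ∏ k ∈ univ.erase (Sum.inl i), (Sum.elim β (-β) (.inl i) - Sum.elim β (-β) k)
      = (∏ j ∈ univ.erase i, (β i - β j)) * ∏ j, (β i + β j) := by
  rw [show univ.erase (Sum.inl i) = (univ.erase i).disjSum univ by ext k; cases k <;> simp,
    prod_disjSum]
  simp

theorem prod_erase_inr_sub_sumElim_neg :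
    ∏ k ∈ univ.erase (Sum.inr i), (Sum.elim β (-β) (.inr i) - Sum.elim β (-β) k)
      = -((∏ j ∈ univ.erase i, (β i - β j)) * ∏ j, (β i + β j)) := by
  rw [show univ.erase (Sum.inr i) = univ.disjSum (univ.erase i) by ext k; cases k <;> simp,
    prod_disjSum]
  simp only [Sum.elim_inl, Sum.elim_inr, Pi.neg_apply]
  have hcard : 0 < Fintype.card ι := Fintype.card_pos_iff.2 ⟨i⟩
  have hsign : ((-1) ^ Fintype.card ι * (-1) ^ (Fintype.card ι - 1) : R) = -1 := by
    rw [← pow_add]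
    exact Odd.neg_one_pow ⟨Fintype.card ι - 1, by omega⟩
  calc (∏ j, (-β i - β j)) * ∏ j ∈ univ.erase i, (-β i - -β j)
      = (∏ j, -(β i + β j)) * ∏ j ∈ univ.erase i, -(β i - β j) := by
        congr 1 <;> exact prod_congr rfl fun j _ => by ring
    _ = _ := by
        rw [prod_neg, prod_neg, card_univ, card_erase_of_mem (mem_univ i), card_univ]
        linear_combination (∏ j ∈ univ.erase i, (β i - β j)) * (∏ j, (β i + β j)) * hsign

end SymmetricNodes

theorem deriv_eq_eval_derivative_div_of_isRoot {𝕜 : Type*} [NontriviallyNormedField 𝕜]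
    {f : 𝕜 → 𝕜} {p q : 𝕜[X]} {x : 𝕜} (hf : f =ᶠ[𝓝 x] fun z => p.eval z / q.eval z)
    (hp : p.IsRoot x) (hq : q.eval x ≠ 0) :
    deriv f x = p.derivative.eval x / q.eval x := by
  rw [hf.deriv_eq, deriv_fun_div p.differentiableAt q.differentiableAt hq, Polynomial.deriv,
    Polynomial.deriv, hp.eq_zero, zero_mul, sub_zero, sq, mul_div_mul_right _ _ hq]

section RationalDerivative

variable {𝕜 ι κ : Type*} [NontriviallyNormedField 𝕜] [Fintype ι] [Fintype κ]
  (β : ι → 𝕜) (ε : κ → 𝕜) (R : 𝕜 → 𝕜)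

theorem deriv_neg_eq_prod_add_div
    (hR : ∀ z, (∀ n, z ≠ -ε n) → deriv R z = (∏ i, (z - β i)) / ∏ n, (z + ε n) ^ 2)
    (hcard : Even (Fintype.card ι)) (i : ι)
    (hi : ∀ n, β i ≠ ε n) :
    deriv R (-β i) = (∏ j, (β i + β j)) / ∏ n, (-β i + ε n) ^ 2 := by
  have hfactor : ∏ j, (-β i - β j) = ∏ j, -(β i + β j) := prod_congr rfl fun j _ => by ring
  rw [hR _ fun n h => hi n (neg_injective h), hfactor, prod_neg, card_univ, hcard.neg_one_pow, one_mul]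

theorem deriv_deriv_eq_prod_erase_div [DecidableEq ι]
    (hR : ∀ z, (∀ n, z ≠ -ε n) → deriv R z = (∏ i, (z - β i)) / ∏ n, (z + ε n) ^ 2)
    (i : ι) (hi : ∀ n, β i ≠ -ε n) :
    deriv (deriv R) (β i) = (∏ j ∈ univ.erase i, (β i - β j)) / ∏ n, (β i + ε n) ^ 2 := by
  have hR_eq : deriv R =ᶠ[𝓝 (β i)]
      fun z => (Lagrange.nodal univ β).eval z / (Lagrange.nodal univ (-ε) ^ 2).eval z := by
    filter_upwards [eventually_all.2 fun n => eventually_ne_nhds (hi n)] with z hz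
    rw [hR z hz, Lagrange.eval_nodal, Lagrange.eval_nodal_neg_sq]
  have hQ : ∏ n, (β i + ε n) ^ 2 ≠ 0 :=
    prod_ne_zero_iff.2 fun n _ => pow_ne_zero 2 fun h => hi n (eq_neg_of_add_eq_zero_left h)
  rw [deriv_eq_eval_derivative_div_of_isRoot hR_eq
      (Lagrange.eval_nodal_at_node (mem_univ i)) (by rwa [Lagrange.eval_nodal_neg_sq]),
    Lagrange.eval_nodal_derivative_eval_node_eq (mem_univ i), Lagrange.eval_nodal,
    Lagrange.eval_nodal_neg_sq]

end RationalDerivative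

section ResidueNumerator

variable {F κ : Type*} [Field F] [Fintype κ] [DecidableEq κ] (ε : κ → F) (a b : κ)

/-- `N(z) = Q(z) Q(-z) / ((z + ε_b)² (ε_a - z)²)` for `Q(z) = ∏ₙ (z + εₙ)²`. -/
noncomputable def residueNumerator : F[X] :=
  Lagrange.nodal (univ.erase b) (-ε) ^ 2 * (Lagrange.nodal (univ.erase a) (-ε) ^ 2).comp (-X)

theorem natDegree_residueNumerator_le :
    (residueNumerator ε a b).natDegree ≤ 4 * (Fintype.card κ - 1) := by
  refine (natDegree_mul_comp_neg_le _ _).trans_eq ?_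
  simp only [natDegree_pow, Lagrange.natDegree_nodal, card_erase_of_mem (mem_univ _), card_univ]
  ring

theorem eval_residueNumerator {x : F} (hb : x + ε b ≠ 0) (ha : -x + ε a ≠ 0) :
    (residueNumerator ε a b).eval x
      = (∏ n, (x + ε n) ^ 2) / (x + ε b) ^ 2 * ((∏ n, (-x + ε n) ^ 2) / (-x + ε a) ^ 2) := by
  simp only [residueNumerator, eval_mul, eval_comp, eval_neg, eval_X,
    Lagrange.eval_nodal_neg_sq]
  rw [prod_erase_eq_div₀ (f := fun n => (x + ε n) ^ 2) (mem_univ b) (pow_ne_zero 2 hb),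
    prod_erase_eq_div₀ (f := fun n => (-x + ε n) ^ 2) (mem_univ a) (pow_ne_zero 2 ha)]

end ResidueNumerator

theorem stmt_8_general (d : ℕ) (β : Fin (2 * d) → ℂ) (ε : Fin d → ℂ) (R : ℂ → ℂ)
    (a b : Fin d)
    (hβinj : Function.Injective β) (hββ : ∀ i j, β i ≠ -β j)
    (hβε : ∀ i n, β i ≠ ε n ∧ β i ≠ -ε n)
    (hR : ∀ z : ℂ, (∀ n, z ≠ -ε n) →
      deriv R z = (∏ i, (z - β i)) / ∏ n, (z + ε n) ^ 2) :
    0 = ∑ i, (1 / (deriv R (-β i) * deriv (deriv R) (β i)))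
        * (1 / ((ε a - β i) ^ 2 * (β i + ε b) ^ 2)
           - 1 / ((ε a + β i) ^ 2 * (ε b - β i) ^ 2)) := by
  have hplus (i n) : β i + ε n ≠ 0 := fun h => (hβε i n).2 (eq_neg_of_add_eq_zero_left h)
  have hminus (i n) : -β i + ε n ≠ 0 := fun h => (hβε i n).1 (neg_add_eq_zero.1 h)
  have hN_deg : (residueNumerator ε a b).degree
      < ↑(#(univ : Finset (Fin (2 * d) ⊕ Fin (2 * d))) - 1) := by
    have hd : 0 < d := a.pos
    have hle := natDegree_residueNumerator_le ε a b
    rw [Fintype.card_fin] at hle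
    refine degree_le_natDegree.trans_lt ?_
    simp only [card_univ, Fintype.card_sum, Fintype.card_fin]
    exact_mod_cast (by omega : _ < 2 * d + 2 * d - 1)
  have hsum := Lagrange.sum_eval_div_prod_sub_eq_zero (v := Sum.elim β (-β))
    (hβinj.sumElim (neg_injective.comp hβinj) hββ).injOn hN_deg
  rw [Fintype.sum_sum_type, ← sum_add_distrib] at hsum
  rw [← hsum]
  refine sum_congr rfl fun i _ => ?_
  rw [prod_erase_inl_sub_sumElim_neg, prod_erase_inr_sub_sumElim_neg,
    deriv_neg_eq_prod_add_div β ε R hR (by simp) i fun n => (hβε i n).1,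
    deriv_deriv_eq_prod_erase_div β ε R hR i fun n => (hβε i n).2]
  simp only [Sum.elim_inl, Sum.elim_inr, Pi.neg_apply]
  rw [eval_residueNumerator ε a b (hplus i b) (hminus i a),
    eval_residueNumerator ε a b (hminus i b) (by rw [neg_neg]; exact hplus i a)]
  -- `ring` treats the inverse of a non-monomial as an atom, so inverses of products are split first
  simp only [neg_neg, div_eq_mul_inv, one_mul, mul_inv, inv_inv]
  ring

/-- Evaluating the partial fraction identity at `(z,w) = (ε_a, ε_b)` gives the
cancellation `0 = ∑_i (1/(R'(-β_i)R''(β_i)))(1/((ε_a-β_i)²(β_i+ε_b)²)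
- 1/((ε_a+β_i)²(ε_b-β_i)²))`. -/
theorem stmt_8 (d : ℕ) (β : Fin (2 * d) → ℂ) (ε : Fin d → ℂ) (R : ℂ → ℂ)
    (a b : Fin d)
    (hβinj : Function.Injective β) (hββ : ∀ i j, β i ≠ -β j)
    (hβε : ∀ i n, β i ≠ ε n ∧ β i ≠ -ε n)
    (hR : ∀ z : ℂ, (∀ n, z ≠ -ε n) →
      deriv R z = (∏ i, (z - β i)) / ∏ n, (z + ε n) ^ 2)
    (hR' : ∀ i, deriv R (-β i) ≠ 0) (hR'' : ∀ i, deriv (deriv R) (β i) ≠ 0) :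
    0 = ∑ i, (1 / (deriv R (-β i) * deriv (deriv R) (β i)))
        * (1 / ((ε a - β i) ^ 2 * (β i + ε b) ^ 2)
           - 1 / ((ε a + β i) ^ 2 * (ε b - β i) ^ 2)) :=
  stmt_8_general d β ε R a b hβinj hββ hβε hR
end
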